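/- arXiv:math/0411595 — 4 statements merged into one kernel-verified Lean document; each statement's English description precedes it below -/
import Mathlib

section
/- Let 2 ≤ i ≤ q and let z ∈ R_q satisfy d_j(z) = 0 for all 0 ≤ j ≤ q. Then the element δ_i(z) ∈ R_{q+i} satisfies d_j(δ_i(z)) = 0 for all 0 ≤ j ≤ q+i; that is, the explicit formula δ_i defines a map from q-cycles of the normalized (Moore) complex of R to (q+i)-cycles. -/
open scoped TensorProduct

noncomputable section

/-- A (possibly degenerate) collection of data for a simplicial `F₂`-vector space:
a family of `ZMod 2`-modules together with face maps `d n j : X n → X (n-1)`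
and degeneracy maps `s n j : X n → X (n+1)`.  The simplicial identities are
required via the predicate `SVS.IsSimplicial` below. -/
structure SVS : Type 1 where
  X : ℕ → Type
  grp : ∀ n, AddCommGroup (X n)
  mod : ∀ n, Module (ZMod 2) (X n)
  d : ∀ n, ℕ → (X n →ₗ[ZMod 2] X (n - 1))
  s : ∀ n, ℕ → (X n →ₗ[ZMod 2] X (n + 1))

attribute [instance] SVS.grp SVS.mod

namespace SVS

/-- Transport along an equality of degrees. -/
def xcast (V : SVS) {m n : ℕ} (h : m = n) : V.X m →ₗ[ZMod 2] V.X n := by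
  subst h; exact LinearMap.id

/-- The simplicial identities, in the (complete) ranges where both sides make sense. -/
structure IsSimplicial (V : SVS) : Prop where
  dd : ∀ n i j, i < j → j ≤ n + 2 →
    (V.d (n+1) i).comp (V.d (n+2) j) = (V.d (n+1) (j-1)).comp (V.d (n+2) i)
  ss : ∀ n i j, i ≤ j → j ≤ n →
    (V.s (n+1) i).comp (V.s n j) = (V.s (n+1) (j+1)).comp (V.s n i)
  ds_lt : ∀ n i j, i < j → j ≤ n + 1 →
    (V.d (n+2) i).comp (V.s (n+1) j) = (V.s n (j-1)).comp (V.d (n+1) i)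
  ds_eq : ∀ n i j, (i = j ∨ i = j + 1) → j ≤ n →
    (V.d (n+1) i).comp (V.s n j) = LinearMap.id
  ds_gt : ∀ n i j, j + 1 < i → i ≤ n + 2 →
    (V.d (n+2) i).comp (V.s (n+1) j) = (V.s n j).comp (V.d (n+1) (i-1))

/-- The suspension `S(V)`, with `S(V)_n = V_{n+1}`, `d_j = d_{j+1}`, `s_j = s_{j+1}`. -/
def susp (V : SVS) : SVS where
  X := fun n => V.X (n+1)
  grp := fun n => V.grp (n+1)
  mod := fun n => V.mod (n+1)
  d := fun n => match n with
    | 0 => fun _ => 0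
    | m+1 => fun j => V.d (m+2) (j+1)
  s := fun n j => V.s (n+1) (j+1)

/-- The `k`-fold suspension `S^k(V)`, with `S^k(V)_n = V_{n+k}`, `d_j = d_{j+k}`,
`s_j = s_{j+k}`.  Evaluating a natural transformation at `shift V k` realizes its
`k`-fold suspension ("replace every `d_r` by `d_{r+k}` and every `s_r` by `s_{r+k}`"). -/
def shift (V : SVS) (k : ℕ) : SVS where
  X := fun n => V.X (n+k)
  grp := fun n => V.grp (n+k)
  mod := fun n => V.mod (n+k)
  d := fun n j =>
    if h : 1 ≤ n then (V.xcast (by omega)).comp (V.d (n+k) (j+k)) else 0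
  s := fun n j => (V.xcast (by omega)).comp (V.s (n+k) (j+k))

end SVS

/-- A simplicial map (morphism of simplicial `F₂`-vector spaces). -/
structure SMap (V W : SVS) where
  f : ∀ n, V.X n →ₗ[ZMod 2] W.X n
  comm_d : ∀ n j, j ≤ n + 1 →
    (f n).comp (V.d (n+1) j) = (W.d (n+1) j).comp (f (n+1))
  comm_s : ∀ n j, j ≤ n →
    (f (n+1)).comp (V.s n j) = (W.s n j).comp (f n)

/-- Iterated degeneracies: `sIter V [a₁, …, aᵣ] q = s_{aᵣ} ∘ ⋯ ∘ s_{a₁}` applied from degree `q`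
(the head of the list is applied first). -/
def sIter (V : SVS) : (l : List ℕ) → (q : ℕ) → (V.X q →ₗ[ZMod 2] V.X (q + l.length))
  | [], _ => LinearMap.id
  | a :: t, q =>
    (V.xcast (show q + 1 + t.length = q + (t.length + 1) by omega)).comp
      ((sIter V t (q+1)).comp (V.s q a))

/-- Iterated degeneracies, with the target degree given explicitly. -/
def sIterTo (V : SVS) (q m : ℕ) (l : List ℕ) (h : q + l.length = m) :
    V.X q →ₗ[ZMod 2] V.X m :=
  (V.xcast h).comp (sIter V l q)

/-- `V_a ⊗ W_b` over `F₂`. -/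
abbrev TT (V W : SVS) (a b : ℕ) : Type :=
  TensorProduct (ZMod 2) (V.X a) (W.X b)

/-- Transport of tensor products along equalities of degrees. -/
def tcast (V W : SVS) {a b c e : ℕ} (h1 : a = c) (h2 : b = e) :
    TT V W a b →ₗ[ZMod 2] TT V W c e :=
  TensorProduct.map (V.xcast h1) (W.xcast h2)

/-- The twist `T : V_a ⊗ W_b → W_b ⊗ V_a`. -/
def twist (V W : SVS) (a b : ℕ) : TT V W a b →ₗ[ZMod 2] TT W V b a :=
  (TensorProduct.comm (ZMod 2) _ _).toLinearMap

/-- `(i,j)`-shuffles, encoded as pairs `(μ, ν)` of subsets of `{0, …, i+j-1}` with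
`μ.card = i`, `ν.card = j`, disjoint with union everything; the increasing enumeration
of a set gives the corresponding increasing sequence. -/
def shuffles (i j : ℕ) : Finset (Finset ℕ × Finset ℕ) :=
  ((Finset.range (i+j)).powersetCard i ×ˢ (Finset.range (i+j)).powersetCard j).filter
    fun p => Disjoint p.1 p.2 ∧ p.1 ∪ p.2 = Finset.range (i+j)

lemma shuffles_card₁ {i j : ℕ} {p : Finset ℕ × Finset ℕ} (hp : p ∈ shuffles i j) :
    p.1.card = i := by
  simp only [shuffles, Finset.mem_filter, Finset.mem_product, Finset.mem_powersetCard] at hp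
  exact hp.1.1.2

lemma shuffles_card₂ {i j : ℕ} {p : Finset ℕ × Finset ℕ} (hp : p ∈ shuffles i j) :
    p.2.card = j := by
  simp only [shuffles, Finset.mem_filter, Finset.mem_product, Finset.mem_powersetCard] at hp
  exact hp.1.2.2

/-- The increasing enumeration of a finite set of naturals. -/
def sortAsc (s : Finset ℕ) : List ℕ := s.sort (· ≤ ·)

lemma length_sortAsc (s : Finset ℕ) : (sortAsc s).length = s.card :=
  Finset.length_sort _

/-- The Eilenberg–MacLane shuffle map
`D_{i,j} = Σ_{(i,j)-shuffles (μ,ν)} (s_{ν_j}⋯s_{ν_1}) ⊗ (s_{μ_i}⋯s_{μ_1}) :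
V_i ⊗ W_j → V_{i+j} ⊗ W_{i+j}`. -/
def Dmap (V W : SVS) (i j : ℕ) : TT V W i j →ₗ[ZMod 2] TT V W (i+j) (i+j) :=
  ∑ p ∈ (shuffles i j).attach,
    TensorProduct.map
      (sIterTo V i (i+j) (sortAsc p.1.2) (by rw [length_sortAsc, shuffles_card₂ p.2]))
      (sIterTo W j (i+j) (sortAsc p.1.1) (by rw [length_sortAsc, shuffles_card₁ p.2]; omega))

open SVS in
/-- `D⁰_{i,j} = S(D_{i-1,j}) ∘ (id ⊗ s₀)`, zero when `i = 0`. -/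
def D0 (V W : SVS) : (i j : ℕ) → (TT V W i j →ₗ[ZMod 2] TT V W (i+j) (i+j))
  | 0, _ => 0
  | i'+1, j =>
    (tcast V W (show i'+j+1 = i'+1+j by omega) (show i'+j+1 = i'+1+j by omega)).comp
      ((Dmap (susp V) (susp W) i' j).comp
        (TensorProduct.map LinearMap.id (W.s j 0)))

open SVS in
/-- The higher Eilenberg–MacLane maps `D^k_{i,j} : V_i ⊗ W_j → V_{i+j-k} ⊗ W_{i+j-k}`,
defined recursively: `D^0` as above, and for `k ≥ 1`,
`D^k_{i,j} = S(D^{k-1}_{i-1,j-1}) + D^{k-1}_{i-1,j}∘(d₀⊗id)` (`k` even),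
`D^k_{i,j} = S(D^{k-1}_{i-1,j-1}) + D^{k-1}_{i,j-1}∘(id⊗d₀)` (`k` odd);
any term involving a negative index is zero. -/
def Dk : (k : ℕ) → (V W : SVS) → (i j : ℕ) →
    (TT V W i j →ₗ[ZMod 2] TT V W (i+j-k) (i+j-k))
  | 0, V, W, i, j => D0 V W i j
  | k+1, V, W, i, j =>
    (match i, j with
     | i'+1, j'+1 =>
       if h : k ≤ i' + j' then
         (tcast V W (show i'+j'-k+1 = i'+1+(j'+1)-(k+1) by omega)
            (show i'+j'-k+1 = i'+1+(j'+1)-(k+1) by omega)).comp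
           (Dk k (susp V) (susp W) i' j')
       else 0
     | _, _ => 0)
    +
    (if (k+1) % 2 = 0 then
      (match i with
       | 0 => 0
       | i'+1 =>
         (tcast V W (show i'+j-k = i'+1+j-(k+1) by omega)
            (show i'+j-k = i'+1+j-(k+1) by omega)).comp
           ((Dk k V W i' j).comp (TensorProduct.map (V.d (i'+1) 0) LinearMap.id)))
     else
      (match j with
       | 0 => 0
       | j'+1 =>
         (tcast V W (show i+j'-k = i+(j'+1)-(k+1) by omega)
            (show i+j'-k = i+(j'+1)-(k+1) by omega)).comp
           ((Dk k V W i j').comp (TensorProduct.map LinearMap.id (W.d (j'+1) 0)))))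

/-- `φ_k : V_i ⊗ W_j → V_{i+j-k} ⊗ W_{i+j-k}`: the identity if `i = j = k`, zero otherwise. -/
def phi (V W : SVS) (k i j : ℕ) : TT V W i j →ₗ[ZMod 2] TT V W (i+j-k) (i+j-k) :=
  if h : i = k ∧ j = k then
    tcast V W (show i = i+j-k by rcases h with ⟨h1, h2⟩; omega)
      (show j = i+j-k by rcases h with ⟨h1, h2⟩; omega)
  else 0

/-- `∂ ⊗ id = Σ_{0 ≤ r ≤ a} d_r ⊗ id : V_a ⊗ W_b → V_{a-1} ⊗ W_b`. -/
def bdryL (V W : SVS) (a b : ℕ) : TT V W a b →ₗ[ZMod 2] TT V W (a-1) b :=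
  ∑ r ∈ Finset.range (a+1), TensorProduct.map (V.d a r) LinearMap.id

/-- `id ⊗ ∂ = Σ_{0 ≤ r ≤ b} id ⊗ d_r : V_a ⊗ W_b → V_a ⊗ W_{b-1}`. -/
def bdryR (V W : SVS) (a b : ℕ) : TT V W a b →ₗ[ZMod 2] TT V W a (b-1) :=
  ∑ r ∈ Finset.range (b+1), TensorProduct.map LinearMap.id (W.d b r)

/-- `δ = Σ_{0 ≤ r ≤ min a b} d_r ⊗ d_r : V_a ⊗ W_b → V_{a-1} ⊗ W_{b-1}`. -/
def delMap (V W : SVS) (a b : ℕ) : TT V W a b →ₗ[ZMod 2] TT V W (a-1) (b-1) :=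
  ∑ r ∈ Finset.range (min a b + 1), TensorProduct.map (V.d a r) (W.d b r)

/-- The twisted map `T ∘ D⁰_{j,i} ∘ T : V_i ⊗ W_j → V_{i+j} ⊗ W_{i+j}`
(`D⁰_{j,i}` evaluated on the pair `(W, V)`). -/
def TD0T (V W : SVS) (i j : ℕ) : TT V W i j →ₗ[ZMod 2] TT V W (i+j) (i+j) :=
  (tcast V W (show j+i = i+j by omega) (show j+i = i+j by omega)).comp
    ((twist W V (j+i) (j+i)).comp ((D0 W V j i).comp (twist V W i j)))

/-- The twisted map `T ∘ D^k_{j,i} ∘ T : V_i ⊗ W_j → V_{i+j-k} ⊗ W_{i+j-k}`. -/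
def TDkT (k : ℕ) (V W : SVS) (i j : ℕ) : TT V W i j →ₗ[ZMod 2] TT V W (i+j-k) (i+j-k) :=
  (tcast V W (show j+i-k = i+j-k by omega) (show j+i-k = i+j-k by omega)).comp
    ((twist W V (j+i-k) (j+i-k)).comp ((Dk k W V j i).comp (twist V W i j)))

open SVS in
/-- `A⁰ = D⁰ + TD⁰T + D`, and for `k ≥ 1`
`A^k = D^k + TD^kT + δ∘D^{k-1} + D^{k-1}∘(∂⊗id) + D^{k-1}∘(id⊗∂)`
(terms with a negative index being zero). -/
def Ak : (k : ℕ) → (V W : SVS) → (i j : ℕ) →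
    (TT V W i j →ₗ[ZMod 2] TT V W (i+j-k) (i+j-k))
  | 0, V, W, i, j => D0 V W i j + TD0T V W i j + Dmap V W i j
  | k+1, V, W, i, j =>
    Dk (k+1) V W i j + TDkT (k+1) V W i j
    + (tcast V W (show i+j-k-1 = i+j-(k+1) by omega)
        (show i+j-k-1 = i+j-(k+1) by omega)).comp
        ((delMap V W (i+j-k) (i+j-k)).comp (Dk k V W i j))
    + (match i with
       | 0 => 0
       | i'+1 =>
         (tcast V W (show i'+j-k = i'+1+j-(k+1) by omega)
            (show i'+j-k = i'+1+j-(k+1) by omega)).comp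
           ((Dk k V W i' j).comp (bdryL V W (i'+1) j)))
    + (match j with
       | 0 => 0
       | j'+1 =>
         (tcast V W (show i+j'-k = i+(j'+1)-(k+1) by omega)
            (show i+j'-k = i+(j'+1)-(k+1) by omega)).comp
           ((Dk k V W i j').comp (bdryR V W i (j'+1))))

open SVS in
/-- The suspension term `S(A^k_{i-1,j-1}) : V_i ⊗ W_j → V_{i+j-(k+1)} ⊗ W_{i+j-(k+1)}`
(zero if a negative index occurs). -/
def AsuspTerm (k : ℕ) (V W : SVS) (i j : ℕ) :
    TT V W i j →ₗ[ZMod 2] TT V W (i+j-(k+1)) (i+j-(k+1)) :=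
  match i, j with
  | i'+1, j'+1 =>
    if h : k ≤ i' + j' then
      (tcast V W (show i'+j'-k+1 = i'+1+(j'+1)-(k+1) by omega)
         (show i'+j'-k+1 = i'+1+(j'+1)-(k+1) by omega)).comp
        (Ak k (susp V) (susp W) i' j')
    else 0
  | _, _ => 0

/-- The term `A^k_{i-1,j} ∘ (d₀ ⊗ id) : V_i ⊗ W_j → V_{i+j-(k+1)} ⊗ W_{i+j-(k+1)}`
(zero if `i = 0`). -/
def Ad0Term (k : ℕ) (V W : SVS) (i j : ℕ) :
    TT V W i j →ₗ[ZMod 2] TT V W (i+j-(k+1)) (i+j-(k+1)) :=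
  match i with
  | 0 => 0
  | i'+1 =>
    (tcast V W (show i'+j-k = i'+1+j-(k+1) by omega)
       (show i'+j-k = i'+1+j-(k+1) by omega)).comp
      ((Ak k V W i' j).comp (TensorProduct.map (V.d (i'+1) 0) LinearMap.id))

/-- The term `A^k_{i,j-1} ∘ (id ⊗ d₀) : V_i ⊗ W_j → V_{i+j-(k+1)} ⊗ W_{i+j-(k+1)}`
(zero if `j = 0`). -/
def Aid0Term (k : ℕ) (V W : SVS) (i j : ℕ) :
    TT V W i j →ₗ[ZMod 2] TT V W (i+j-(k+1)) (i+j-(k+1)) :=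
  match j with
  | 0 => 0
  | j'+1 =>
    (tcast V W (show i+j'-k = i+(j'+1)-(k+1) by omega)
       (show i+j'-k = i+(j'+1)-(k+1) by omega)).comp
      ((Ak k V W i j').comp (TensorProduct.map LinearMap.id (W.d (j'+1) 0)))

/-- The index set `V(q,i)`: pairs `(μ, ν)` of `i`-element subsets of
`{q-i, …, q+i-1}`, disjoint with union everything, and `q-i ∈ μ`
(i.e. `μ₁ = q-i` for the increasing enumerations). -/
def deltaSet (q i : ℕ) : Finset (Finset ℕ × Finset ℕ) :=
  ((Finset.Ico (q-i) (q+i)).powersetCard i ×ˢ (Finset.Ico (q-i) (q+i)).powersetCard i).filter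
    fun p => Disjoint p.1 p.2 ∧ p.1 ∪ p.2 = Finset.Ico (q-i) (q+i) ∧ q-i ∈ p.1

lemma deltaSet_card₁ {q i : ℕ} {p : Finset ℕ × Finset ℕ} (hp : p ∈ deltaSet q i) :
    p.1.card = i := by
  simp only [deltaSet, Finset.mem_filter, Finset.mem_product, Finset.mem_powersetCard] at hp
  exact hp.1.1.2

lemma deltaSet_card₂ {q i : ℕ} {p : Finset ℕ × Finset ℕ} (hp : p ∈ deltaSet q i) :
    p.2.card = i := by
  simp only [deltaSet, Finset.mem_filter, Finset.mem_product, Finset.mem_powersetCard] at hp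
  exact hp.1.2.2

/-- Data of a simplicial commutative `F₂`-algebra: a family of commutative
`ZMod 2`-algebras with face and degeneracy maps which are algebra maps;
the simplicial identities are required via `SAlg.IsSimplicial`. -/
structure SAlg : Type 1 where
  X : ℕ → Type
  ring : ∀ n, CommRing (X n)
  alg : ∀ n, Algebra (ZMod 2) (X n)
  d : ∀ n, ℕ → (X n →ₐ[ZMod 2] X (n - 1))
  s : ∀ n, ℕ → (X n →ₐ[ZMod 2] X (n + 1))

attribute [instance] SAlg.ring SAlg.alg

namespace SAlg

def acast (R : SAlg) {m n : ℕ} (h : m = n) : R.X m →ₐ[ZMod 2] R.X n := by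
  subst h; exact AlgHom.id _ _

structure IsSimplicial (R : SAlg) : Prop where
  dd : ∀ n i j, i < j → j ≤ n + 2 →
    (R.d (n+1) i).comp (R.d (n+2) j) = (R.d (n+1) (j-1)).comp (R.d (n+2) i)
  ss : ∀ n i j, i ≤ j → j ≤ n →
    (R.s (n+1) i).comp (R.s n j) = (R.s (n+1) (j+1)).comp (R.s n i)
  ds_lt : ∀ n i j, i < j → j ≤ n + 1 →
    (R.d (n+2) i).comp (R.s (n+1) j) = (R.s n (j-1)).comp (R.d (n+1) i)
  ds_eq : ∀ n i j, (i = j ∨ i = j + 1) → j ≤ n →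
    (R.d (n+1) i).comp (R.s n j) = AlgHom.id _ _
  ds_gt : ∀ n i j, j + 1 < i → i ≤ n + 2 →
    (R.d (n+2) i).comp (R.s (n+1) j) = (R.s n j).comp (R.d (n+1) (i-1))

/-- The underlying simplicial `F₂`-vector space of a simplicial `F₂`-algebra. -/
def toSVS (R : SAlg) : SVS where
  X := R.X
  grp := fun n => inferInstance
  mod := fun n => inferInstance
  d := fun n j => (R.d n j).toLinearMap
  s := fun n j => (R.s n j).toLinearMap

end SAlg

/-- Iterated degeneracies for a simplicial algebra (head of the list applied first). -/
def sIterA (R : SAlg) : (l : List ℕ) → (q : ℕ) → (R.X q →ₐ[ZMod 2] R.X (q + l.length))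
  | [], _ => AlgHom.id _ _
  | a :: t, q =>
    (R.acast (show q + 1 + t.length = q + (t.length + 1) by omega)).comp
      ((sIterA R t (q+1)).comp (R.s q a))

def sIterATo (R : SAlg) (q m : ℕ) (l : List ℕ) (h : q + l.length = m) :
    R.X q →ₐ[ZMod 2] R.X m :=
  (R.acast h).comp (sIterA R l q)

/-- The explicit formula
`δ_i(z) = Σ_{(μ,ν) ∈ V(q,i)} s_{ν_i}⋯s_{ν_1}(z) · s_{μ_i}⋯s_{μ_1}(z) ∈ R_{q+i}`. -/
def deltaOp (R : SAlg) (q i : ℕ) (z : R.X q) : R.X (q+i) :=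
  ∑ p ∈ (deltaSet q i).attach,
    (sIterATo R q (q+i) (sortAsc p.1.2)
        (by rw [length_sortAsc, deltaSet_card₂ p.2]) z)
      * (sIterATo R q (q+i) (sortAsc p.1.1)
        (by rw [length_sortAsc, deltaSet_card₁ p.2]) z)

/-- Multiplication `μ : R_m ⊗ R_m → R_m` as a linear map. -/
def mulMap (R : SAlg) (m : ℕ) :
    TensorProduct (ZMod 2) (R.X m) (R.X m) →ₗ[ZMod 2] R.X m :=
  TensorProduct.lift (LinearMap.mul (ZMod 2) (R.X m))

open SimplexCategory CategoryTheory in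
/-- The suspension `S′(α)` of a morphism `α : [m] → [n]` in the simplex category:
`S′(α)(0) = 0` and `S′(α)(i) = α(i-1) + 1` for `i ≥ 1`. -/
def suspMor {x y : SimplexCategory} (f : x ⟶ y) :
    SimplexCategory.mk (x.len + 1) ⟶ SimplexCategory.mk (y.len + 1) :=
  SimplexCategory.mkHom
    { toFun := fun i => Fin.cases 0 (fun i' => (f.toOrderHom i').succ) i
      monotone' := by
        intro a b hab
        induction a using Fin.cases with
        | zero => simp [Fin.zero_le]
        | succ a' =>
          induction b using Fin.cases with
          | zero =>
            exact absurd (Fin.le_zero_iff.mp hab) (Fin.succ_ne_zero a')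
          | succ b' =>
            simp only [Fin.cases_succ]
            exact Fin.succ_le_succ_iff.mpr
              (f.toOrderHom.monotone (Fin.succ_le_succ_iff.mp hab)) }

open SimplexCategory CategoryTheory in
/-- The suspension functor `S′ : Δ → Δ`, `[n] ↦ [n+1]`,
`(S′α)(0) = 0`, `(S′α)(i) = α(i-1)+1` for `i ≥ 1`. -/
def suspFunctor : CategoryTheory.Functor SimplexCategory SimplexCategory where
  obj x := SimplexCategory.mk (x.len + 1)
  map f := suspMor f
  map_id x := by
    apply SimplexCategory.Hom.ext
    ext i
    induction i using Fin.cases with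
    | zero => rfl
    | succ i' => rfl
  map_comp f g := by
    apply SimplexCategory.Hom.ext
    ext i
    induction i using Fin.cases with
    | zero => rfl
    | succ i' => rfl

open SVS in
/-- The term `S(δ ∘ D_{i-1,j}) ∘ (id ⊗ s₀) : V_i ⊗ W_j → V_{i+j-1} ⊗ W_{i+j-1}`,
i.e. the suspension of the composite `δ ∘ D_{i-1,j} : V_{i-1} ⊗ W_j → V_{i+j-2} ⊗ W_{i+j-2}`
(evaluated at the suspended simplicial vector spaces), precomposed with `id ⊗ s₀`;
any term involving a negative index is zero. -/
def SdelDTerm (V W : SVS) (i j : ℕ) : TT V W i j →ₗ[ZMod 2] TT V W (i+j-1) (i+j-1) :=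
  match i with
  | 0 => 0
  | i'+1 =>
    if h : 1 ≤ i' + j then
      ((tcast V W (show i'+j-1+1 = i'+1+j-1 by omega) (show i'+j-1+1 = i'+1+j-1 by omega)).comp
        ((delMap (susp V) (susp W) (i'+j) (i'+j)).comp
          (Dmap (susp V) (susp W) i' j))).comp
        (TensorProduct.map LinearMap.id (W.s j 0))
    else 0

/-- The term `D_{i-1,j} ∘ (d₀ ⊗ id) : V_i ⊗ W_j → V_{i+j-1} ⊗ W_{i+j-1}`
(zero if `i = 0`). -/
def Dd0Term (V W : SVS) (i j : ℕ) : TT V W i j →ₗ[ZMod 2] TT V W (i+j-1) (i+j-1) :=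
  match i with
  | 0 => 0
  | i'+1 =>
    (tcast V W (show i'+j = i'+1+j-1 by omega) (show i'+j = i'+1+j-1 by omega)).comp
      ((Dmap V W i' j).comp (TensorProduct.map (V.d (i'+1) 0) LinearMap.id))

/-!
Apply `d_j` to a summand `s_ν z · s_μ z` of `δ_i(z)`. Pushing `d_j` through the degeneracies
of one factor, it is absorbed by `d_j s_j = d_j s_{j-1} = id` if the index set contains `j` or
`j - 1`; otherwise it reaches the cycle `z` and the factor vanishes. So the only surviving
summands are those where `j` and `j - 1` lie in different blocks, and for these exchanging
`j - 1` and `j` between the blocks (then swapping the blocks, to keep `q - i` in `μ`) does not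
change `d_j` of the summand. Since the blocks have `i ≥ 2` elements this is a fixed-point-free
involution, so the surviving summands cancel in pairs over `F₂`.
-/

namespace SAlg.IsSimplicial

variable {R : SAlg}

lemma d_s_of_lt (hR : R.IsSimplicial) {n i j : ℕ} (hij : i < j) (hj : j ≤ n + 1)
    (x : R.X (n + 1)) : R.d (n + 2) i (R.s (n + 1) j x) = R.s n (j - 1) (R.d (n + 1) i x) :=
  AlgHom.congr_fun (hR.ds_lt n i j hij hj) x

lemma d_s_self (hR : R.IsSimplicial) {n i j : ℕ} (hij : i = j ∨ i = j + 1) (hj : j ≤ n)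
    (x : R.X n) : R.d (n + 1) i (R.s n j x) = x :=
  AlgHom.congr_fun (hR.ds_eq n i j hij hj) x

lemma d_s_of_gt (hR : R.IsSimplicial) {n i j : ℕ} (hij : j + 1 < i) (hi : i ≤ n + 2)
    (x : R.X (n + 1)) : R.d (n + 2) i (R.s (n + 1) j x) = R.s n j (R.d (n + 1) (i - 1) x) :=
  AlgHom.congr_fun (hR.ds_gt n i j hij hi) x

end SAlg.IsSimplicial

lemma sortAsc_insert_of_lt {S : Finset ℕ} {a : ℕ} (h : ∀ x ∈ S, x < a) :
    sortAsc (insert a S) = sortAsc S ++ [a] := by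
  have ha : a ∉ S := fun ha => (h a ha).false
  refine List.Perm.eq_of_pairwise' (Finset.pairwise_sort _ _) ?_ ?_
  · exact List.pairwise_append.mpr ⟨Finset.pairwise_sort _ _, List.pairwise_singleton _ _,
      fun x hx b hb => by
        rw [List.mem_singleton.mp hb]; exact (h x ((Finset.mem_sort _).mp hx)).le⟩
  · refine List.perm_of_nodup_nodup_toFinset_eq (Finset.sort_nodup _ _) ?_ ?_
    · exact List.nodup_append.mpr ⟨Finset.sort_nodup _ _, List.nodup_singleton a,
        fun x hx b hb => by
          rw [List.mem_singleton.mp hb]; exact (h x ((Finset.mem_sort _).mp hx)).ne⟩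
    · ext x; simp [sortAsc]

section sIterATo

variable (R : SAlg) {q : ℕ}

lemma sIterATo_cons {m a : ℕ} {t : List ℕ} (h : q + (a :: t).length = m)
    (h' : q + 1 + t.length = m) (z : R.X q) :
    sIterATo R q m (a :: t) h z = sIterATo R (q + 1) m t h' (R.s q a z) := by
  subst h; rfl

lemma sIterATo_nil {l : List ℕ} (hl : l = []) (h : q + l.length = q) (z : R.X q) :
    sIterATo R q q l h z = z := by
  subst hl; rfl

lemma sIterATo_concat {n a : ℕ} {l l' : List ℕ} (hl : l' = l ++ [a])
    (h : q + l'.length = n + 1) (h' : q + l.length = n) (z : R.X q) :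
    sIterATo R q (n + 1) l' h z = R.s n a (sIterATo R q n l h' z) := by
  subst hl
  induction l generalizing q with
  | nil => subst h'; rfl
  | cons b t ih =>
    change sIterATo R q (n + 1) (b :: (t ++ [a])) h z = _
    simp only [List.length_cons, List.length_append] at h h'
    rw [sIterATo_cons R (t := t ++ [a]) _ (by simp; omega) z,
      ih (h' := by omega) (h := by simp; omega), sIterATo_cons R (t := t) _ (by omega) z]

end sIterATo

/-- `s_{a_r} ⋯ s_{a_1} z` for `S = {a_1 < ⋯ < a_r}`, read in degree `m`. It is `0` unless
`m = q + |S|`, so that the face identities below need no degree bookkeeping. -/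
def sIterSet (R : SAlg) (q m : ℕ) (S : Finset ℕ) (z : R.X q) : R.X m :=
  if h : q + S.card = m then sIterATo R q m (sortAsc S) (by rwa [length_sortAsc]) z else 0

section sIterSet

variable {R : SAlg} {q : ℕ}

lemma sIterSet_of_card_ne {m : ℕ} {S : Finset ℕ} (h : q + S.card ≠ m) (z : R.X q) :
    sIterSet R q m S z = 0 :=
  dif_neg h

lemma sIterSet_empty (z : R.X q) : sIterSet R q q ∅ z = z := by
  rw [sIterSet, dif_pos (by simp)]
  exact sIterATo_nil R (Finset.sort_empty _) _ z

lemma sIterSet_insert_of_lt {n a : ℕ} {S : Finset ℕ} (h : ∀ x ∈ S, x < a) (z : R.X q) :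
    sIterSet R q (n + 1) (insert a S) z = R.s n a (sIterSet R q n S z) := by
  have hcard : (insert a S).card = S.card + 1 :=
    Finset.card_insert_of_notMem fun ha => (h a ha).false
  by_cases hn : q + S.card = n
  · rw [sIterSet, sIterSet, dif_pos (by omega), dif_pos hn,
      sIterATo_concat R (sortAsc_insert_of_lt h)]
  · rw [sIterSet_of_card_ne (by omega), sIterSet_of_card_ne hn, map_zero]

end sIterSet

def swapAdj (j : ℕ) (S : Finset ℕ) : Finset ℕ :=
  S.map (Equiv.swap (j - 1) j).toEmbedding

section swapAdj

variable {j : ℕ} {S : Finset ℕ}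

lemma mem_swapAdj {x : ℕ} : x ∈ swapAdj j S ↔ Equiv.swap (j - 1) j x ∈ S := by
  simp [swapAdj, Finset.mem_map_equiv]

@[simp]
lemma card_swapAdj : (swapAdj j S).card = S.card :=
  Finset.card_map _

@[simp]
lemma swapAdj_swapAdj : swapAdj j (swapAdj j S) = S := by
  ext x; simp only [mem_swapAdj, Equiv.swap_apply_self]

lemma swapAdj_eq_self (h : j - 1 ∈ S ↔ j ∈ S) : swapAdj j S = S := by
  ext x
  rw [mem_swapAdj, Equiv.swap_apply_def]
  split_ifs with h1 h2
  · rw [h1]; exact h.symm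
  · rw [h2]; exact h
  · rfl

lemma swapAdj_insert (a : ℕ) :
    swapAdj j (insert a S) = insert (Equiv.swap (j - 1) j a) (swapAdj j S) :=
  Finset.map_insert _ _ _

end swapAdj

namespace SAlg.IsSimplicial

variable {R : SAlg} {q : ℕ}

lemma d_sIterSet_eq_zero (hR : R.IsSimplicial) {z : R.X q} (hz : ∀ j ≤ q, R.d q j z = 0)
    (S : Finset ℕ) {n j : ℕ} (hS : ∀ x ∈ S, x < n) (hj : j ≤ n) (hjS : j ∉ S)
    (hj1S : j - 1 ∉ S) : R.d n j (sIterSet R q n S z) = 0 := by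
  induction S using Finset.induction_on_max generalizing n j with
  | empty =>
    by_cases hn : q = n
    · subst hn; rw [sIterSet_empty, hz j hj]
    · rw [sIterSet_of_card_ne (by simpa using hn), map_zero]
  | insert a S hlt ih =>
    simp only [Finset.mem_insert, not_or] at hS hjS hj1S
    have ha : a < n := hS a (Or.inl rfl)
    obtain ⟨k, rfl⟩ : ∃ k, n = k + 2 := ⟨n - 2, by omega⟩
    rw [sIterSet_insert_of_lt hlt]
    rcases lt_or_gt_of_ne hjS.1 with hja | hja
    · rw [hR.d_s_of_lt hja (by omega), ih (fun x hx => by have := hlt x hx; omega) (by omega)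
        hjS.2 hj1S.2, map_zero]
    · rw [hR.d_s_of_gt (by omega) hj, ih (fun x hx => by have := hlt x hx; omega) (by omega)
        (fun h => by have := hlt _ h; omega) (fun h => by have := hlt _ h; omega), map_zero]

lemma d_sIterSet_swapAdj (hR : R.IsSimplicial) (z : R.X q) (S : Finset ℕ) {n j : ℕ}
    (hS : ∀ x ∈ S, x < n) (hjn : j < n) (hxor : j ∈ S ↔ j - 1 ∉ S) :
    R.d n j (sIterSet R q n S z) = R.d n j (sIterSet R q n (swapAdj j S) z) := by
  induction S using Finset.induction_on_max generalizing n with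
  | empty => simp at hxor
  | insert a S hlt ih =>
    have ha : a < n := hS a (Finset.mem_insert_self a S)
    obtain ⟨k, rfl⟩ : ∃ k, n = k + 1 := ⟨n - 1, by omega⟩
    rw [swapAdj_insert]
    rcases lt_or_ge j a with hja | haj
    · have hS' : ∀ x ∈ swapAdj j S, x < a := fun x hx => by
        have := hlt _ (mem_swapAdj.mp hx)
        rw [Equiv.swap_apply_def] at this; split_ifs at this <;> omega
      obtain ⟨k, rfl⟩ : ∃ k', k = k' + 1 := ⟨k - 1, by omega⟩
      rw [Finset.mem_insert, Finset.mem_insert, or_iff_right hja.ne,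
        or_iff_right (by omega)] at hxor
      rw [Equiv.swap_apply_of_ne_of_ne (by omega) (by omega), sIterSet_insert_of_lt hlt,
        sIterSet_insert_of_lt hS', hR.d_s_of_lt hja (by omega), hR.d_s_of_lt hja (by omega),
        ih (fun x hx => (hlt x hx).trans_le (by omega)) (by omega) hxor]
    · have hjS : j ∉ S := fun h => (hlt j h).not_ge haj
      rcases eq_or_lt_of_le haj with rfl | haj
      · have hj1S : a - 1 ∉ S := fun h =>
          hxor.mp (Finset.mem_insert_self a S) (Finset.mem_insert_of_mem h)
        have ha : a ≠ 0 := fun h0 => hxor.mp (Finset.mem_insert_self a S) (by simp [h0])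
        rw [swapAdj_eq_self (iff_of_false hj1S hjS), Equiv.swap_apply_right,
          sIterSet_insert_of_lt hlt, sIterSet_insert_of_lt (fun x hx => by
            have := hlt x hx; have : x ≠ a - 1 := fun h => hj1S (h ▸ hx); omega),
          hR.d_s_self (Or.inl rfl) (by omega), hR.d_s_self (Or.inr (by omega)) (by omega)]
      · have hj1 : j - 1 = a := by
          by_contra hne
          refine hxor.mpr ?_ |> Finset.mem_insert.mp |>.elim (fun h => haj.ne h.symm) hjS
          rw [Finset.mem_insert, not_or]
          exact ⟨hne, fun h => (hlt _ h).not_ge (by omega)⟩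
        have hj1S : j - 1 ∉ S := fun h => (hlt _ h).ne hj1
        have hswap : Equiv.swap (j - 1) j a = j := by rw [← hj1, Equiv.swap_apply_left]
        rw [swapAdj_eq_self (iff_of_false hj1S hjS), hswap,
          sIterSet_insert_of_lt hlt, sIterSet_insert_of_lt (fun x hx => (hlt x hx).trans haj),
          hR.d_s_self (Or.inr (by omega)) (by omega), hR.d_s_self (Or.inl rfl) (by omega)]

end SAlg.IsSimplicial
def Straddles (j : ℕ) (p : Finset ℕ × Finset ℕ) : Prop :=
  (j ∈ p.1 ∧ j - 1 ∈ p.2) ∨ (j - 1 ∈ p.1 ∧ j ∈ p.2)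

def partner (c j : ℕ) (p : Finset ℕ × Finset ℕ) : Finset ℕ × Finset ℕ :=
  if c ∈ swapAdj j p.1 then (swapAdj j p.1, swapAdj j p.2) else (swapAdj j p.2, swapAdj j p.1)

section partner

variable {c j : ℕ} {p : Finset ℕ × Finset ℕ}

lemma Straddles.mem_union (hs : Straddles j p) : j - 1 ∈ p.1 ∪ p.2 ∧ j ∈ p.1 ∪ p.2 := by
  simp only [Finset.mem_union]
  unfold Straddles at hs
  tauto

lemma Straddles.mem_iff_not_mem (hs : Straddles j p) (hd : Disjoint p.1 p.2) :
    (j ∈ p.1 ↔ j - 1 ∉ p.1) ∧ (j ∈ p.2 ↔ j - 1 ∉ p.2) := by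
  have hj : j ∈ p.1 → j ∉ p.2 := fun h => Finset.disjoint_left.mp hd h
  have hj1 : j - 1 ∈ p.1 → j - 1 ∉ p.2 := fun h => Finset.disjoint_left.mp hd h
  unfold Straddles at hs
  tauto

lemma avoids_of_not_straddles (hs : ¬ Straddles j p) (hd : Disjoint p.1 p.2) :
    (j ∉ p.1 ∧ j - 1 ∉ p.1) ∨ (j ∉ p.2 ∧ j - 1 ∉ p.2) := by
  have hj : j ∈ p.1 → j ∉ p.2 := fun h => Finset.disjoint_left.mp hd h
  have hj1 : j - 1 ∈ p.1 → j - 1 ∉ p.2 := fun h => Finset.disjoint_left.mp hd h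
  unfold Straddles at hs
  tauto

lemma straddles_partner (hs : Straddles j p) : Straddles j (partner c j p) := by
  unfold partner Straddles at *
  split_ifs <;> simp only [mem_swapAdj, Equiv.swap_apply_left, Equiv.swap_apply_right] <;> tauto

lemma partner_partner (hd : Disjoint p.1 p.2) (hc : c ∈ p.1) :
    partner c j (partner c j p) = p := by
  unfold partner
  split_ifs with h1 h2 h2 <;> simp only [swapAdj_swapAdj] at h2 ⊢
  · exact absurd hc h2
  · exact absurd hc (Finset.disjoint_right.mp hd h2)

lemma Straddles.swapAdj_ne (hs : Straddles j p) (hd : Disjoint p.1 p.2) :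
    swapAdj j p.1 ≠ p.1 := by
  intro h
  have hj : j ∈ swapAdj j p.1 ↔ j - 1 ∈ p.1 := by rw [mem_swapAdj, Equiv.swap_apply_right]
  rw [h] at hj
  have := hs.mem_iff_not_mem hd
  tauto

lemma Straddles.swapAdj_ne_snd (hs : Straddles j p) (hd : Disjoint p.1 p.2)
    (h2 : 2 ≤ p.2.card) : swapAdj j p.1 ≠ p.2 := by
  intro h
  have fixed_of_mem : ∀ x ∈ p.2, x ≠ j - 1 → x ≠ j → False := fun x hx h1 h2 => by
    have hx1 : x ∈ p.1 := by
      rw [← h, mem_swapAdj, Equiv.swap_apply_of_ne_of_ne h1 h2] at hx; exact hx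
    exact Finset.disjoint_left.mp hd hx1 hx
  rcases hs with ⟨hjA, hj1B⟩ | ⟨hj1A, hjB⟩
  · obtain ⟨x, hx, hne⟩ := Finset.exists_mem_ne h2 (j - 1)
    exact fixed_of_mem x hx hne fun e => Finset.disjoint_left.mp hd (e ▸ hjA) hx
  · obtain ⟨x, hx, hne⟩ := Finset.exists_mem_ne h2 j
    exact fixed_of_mem x hx (fun e => Finset.disjoint_left.mp hd (e ▸ hj1A) hx) hne

lemma Straddles.partner_ne (hs : Straddles j p) (hd : Disjoint p.1 p.2) (h2 : 2 ≤ p.2.card) :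
    partner c j p ≠ p := by
  unfold partner
  split_ifs
  · exact fun h => hs.swapAdj_ne hd (congrArg Prod.fst h)
  · exact fun h => hs.swapAdj_ne_snd hd h2 (congrArg Prod.snd h)

end partner

lemma mem_deltaSet {q i : ℕ} {p : Finset ℕ × Finset ℕ} :
    p ∈ deltaSet q i ↔ p.1.card = i ∧ p.2.card = i ∧ Disjoint p.1 p.2 ∧
      p.1 ∪ p.2 = Finset.Ico (q - i) (q + i) ∧ q - i ∈ p.1 := by
  simp only [deltaSet, Finset.mem_filter, Finset.mem_product, Finset.mem_powersetCard]
  constructor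
  · rintro ⟨⟨⟨-, h1⟩, -, h2⟩, h3, h4, h5⟩
    exact ⟨h1, h2, h3, h4, h5⟩
  · rintro ⟨h1, h2, h3, h4, h5⟩
    exact ⟨⟨⟨h4 ▸ Finset.subset_union_left, h1⟩, h4 ▸ Finset.subset_union_right, h2⟩,
      h3, h4, h5⟩

lemma Straddles.partner_mem {q i j : ℕ} {p : Finset ℕ × Finset ℕ} (hi : 1 ≤ i)
    (hp : p ∈ deltaSet q i) (hs : Straddles j p) : partner (q - i) j p ∈ deltaSet q i := by
  obtain ⟨h1, h2, hd, hu, -⟩ := mem_deltaSet.mp hp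
  have hu' : swapAdj j p.1 ∪ swapAdj j p.2 = Finset.Ico (q - i) (q + i) := by
    rw [swapAdj, swapAdj, ← Finset.map_union, hu, ← swapAdj,
      swapAdj_eq_self (by rw [← hu]; exact iff_of_true hs.mem_union.1 hs.mem_union.2)]
  have hc : q - i ∈ swapAdj j p.1 ∪ swapAdj j p.2 := by
    rw [hu']; exact Finset.mem_Ico.mpr ⟨le_rfl, by omega⟩
  have hd' : Disjoint (swapAdj j p.1) (swapAdj j p.2) := (Finset.disjoint_map _).mpr hd
  unfold partner
  split_ifs with hc1
  · exact mem_deltaSet.mpr ⟨by simpa, by simpa, hd', hu', hc1⟩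
  · exact mem_deltaSet.mpr ⟨by simpa, by simpa, hd'.symm, by rw [Finset.union_comm, hu'],
      (Finset.mem_union.mp hc).resolve_left hc1⟩

lemma lt_of_mem_deltaSet {q i x : ℕ} {p : Finset ℕ × Finset ℕ} (hp : p ∈ deltaSet q i)
    (hx : x ∈ p.1 ∪ p.2) : x < q + i := by
  rw [(mem_deltaSet.mp hp).2.2.2.1] at hx
  exact (Finset.mem_Ico.mp hx).2

def deltaTerm (R : SAlg) (q i : ℕ) (z : R.X q) (p : Finset ℕ × Finset ℕ) : R.X (q + i) :=
  sIterSet R q (q + i) p.2 z * sIterSet R q (q + i) p.1 z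

section deltaTerm

variable {R : SAlg} {q i : ℕ}

lemma deltaOp_eq_sum (z : R.X q) :
    deltaOp R q i z = ∑ p ∈ deltaSet q i, deltaTerm R q i z p := by
  rw [deltaOp, ← Finset.sum_attach (deltaSet q i)]
  refine Finset.sum_congr rfl fun p _ => ?_
  rw [deltaTerm, sIterSet, sIterSet, dif_pos (by rw [deltaSet_card₂ p.2]),
    dif_pos (by rw [deltaSet_card₁ p.2])]

lemma deltaTerm_partner (z : R.X q) (c j : ℕ) (p : Finset ℕ × Finset ℕ) :
    deltaTerm R q i z (partner c j p) = deltaTerm R q i z (swapAdj j p.1, swapAdj j p.2) := by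
  unfold partner
  split_ifs
  · rfl
  · exact mul_comm _ _

lemma SAlg.IsSimplicial.d_deltaTerm_eq_zero (hR : R.IsSimplicial) {z : R.X q}
    (hz : ∀ j ≤ q, R.d q j z = 0) {j : ℕ} (hj : j ≤ q + i) {p : Finset ℕ × Finset ℕ}
    (hp : p ∈ deltaSet q i) (hs : ¬ Straddles j p) :
    R.d (q + i) j (deltaTerm R q i z p) = 0 := by
  have hlt : ∀ x ∈ p.1 ∪ p.2, x < q + i := fun _ => lt_of_mem_deltaSet hp
  rw [deltaTerm, map_mul]
  rcases avoids_of_not_straddles hs (mem_deltaSet.mp hp).2.2.1 with ⟨hj1, hj2⟩ | ⟨hj1, hj2⟩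
  · rw [hR.d_sIterSet_eq_zero hz p.1 (fun x hx => hlt x (Finset.mem_union_left _ hx)) hj hj1 hj2,
      mul_zero]
  · rw [hR.d_sIterSet_eq_zero hz p.2 (fun x hx => hlt x (Finset.mem_union_right _ hx)) hj hj1 hj2,
      zero_mul]

lemma Straddles.d_deltaTerm_partner (hR : R.IsSimplicial) (z : R.X q) {c j : ℕ}
    {p : Finset ℕ × Finset ℕ} (hp : p ∈ deltaSet q i) (hs : Straddles j p) :
    R.d (q + i) j (deltaTerm R q i z (partner c j p)) = R.d (q + i) j (deltaTerm R q i z p) := by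
  have hlt : ∀ x ∈ p.1 ∪ p.2, x < q + i := fun _ => lt_of_mem_deltaSet hp
  obtain ⟨hx1, hx2⟩ := hs.mem_iff_not_mem (mem_deltaSet.mp hp).2.2.1
  rw [deltaTerm_partner, deltaTerm, deltaTerm, map_mul, map_mul,
    ← hR.d_sIterSet_swapAdj z p.1 (fun x hx => hlt x (Finset.mem_union_left _ hx))
      (hlt j hs.mem_union.2) hx1,
    ← hR.d_sIterSet_swapAdj z p.2 (fun x hx => hlt x (Finset.mem_union_right _ hx))
      (hlt j hs.mem_union.2) hx2]

end deltaTerm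

theorem stmt_0_general (R : SAlg) (hR : R.IsSimplicial) (q i : ℕ) (h2 : 2 ≤ i)
    (z : R.X q) (hz : ∀ j ≤ q, R.d q j z = 0) :
    ∀ j ≤ q + i, R.d (q+i) j (deltaOp R q i z) = 0 := by
  classical
  intro j hj
  rw [deltaOp_eq_sum, map_sum]
  refine Finset.sum_involution (fun p _ => if Straddles j p then partner (q - i) j p else p)
    (fun p hp => ?_) (fun p hp hne => ?_) (fun p hp => ?_) (fun p hp => ?_)
  · split_ifs with hs
    · rw [hs.d_deltaTerm_partner hR z hp, ZModModule.add_self]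
    · exact ZModModule.add_self _
  · have hs : Straddles j p := by_contra fun hs => hne (hR.d_deltaTerm_eq_zero hz hj hp hs)
    obtain ⟨-, h2', hd, -⟩ := mem_deltaSet.mp hp
    rw [if_pos hs]
    exact hs.partner_ne hd (h2'.symm ▸ h2)
  · split_ifs with hs
    · exact hs.partner_mem (by omega) hp
    · exact hp
  · obtain ⟨-, -, hd, -, hc⟩ := mem_deltaSet.mp hp
    by_cases hs : Straddles j p
    · rw [if_pos hs, if_pos (straddles_partner hs), partner_partner hd hc]
    · simp only [if_neg hs]

theorem stmt_0 (R : SAlg) (hR : R.IsSimplicial) (q i : ℕ) (h2 : 2 ≤ i) (hiq : i ≤ q)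
    (z : R.X q) (hz : ∀ j ≤ q, R.d q j z = 0) :
    ∀ j ≤ q + i, R.d (q+i) j (deltaOp R q i z) = 0 :=
  stmt_0_general R hR q i h2 z hz
end
end

section
/- Let q ≥ 1 and let z ∈ R_q satisfy d_j(z) = 0 for all 0 ≤ j ≤ q. Then δ_1(z) = s_q(z)·s_{q−1}(z), and d_j(δ_1(z)) = 0 for all 0 ≤ j ≤ q+1 with j ≠ q, while d_q(δ_1(z)) = z². -/
open scoped TensorProduct

noncomputable section

theorem stmt_1 (R : SAlg) (hR : R.IsSimplicial) (q : ℕ) (hq : 1 ≤ q)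
    (z : R.X q) (hz : ∀ j ≤ q, R.d q j z = 0) :
    deltaOp R q 1 z = R.s q q z * R.s q (q-1) z
    ∧ (∀ j ≤ q + 1, j ≠ q → R.d (q+1) j (deltaOp R q 1 z) = 0)
    ∧ R.d (q+1) q (deltaOp R q 1 z) = z * z := by
  obtain ⟨m, rfl⟩ : ∃ m, q = m + 1 := ⟨q - 1, by omega⟩
  -- Step 1: compute the index set
  have hIco : Finset.Ico (m+1-1) (m+1+1) = {m, m+1} := by
    ext x; simp [Finset.mem_Ico, Finset.mem_insert]; omega
  have hset : deltaSet (m+1) 1 = {({m}, {m+1})} := by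
    ext p
    obtain ⟨a, b⟩ := p
    simp only [deltaSet, Finset.mem_filter, Finset.mem_product, Finset.mem_powersetCard,
      Finset.mem_singleton, Prod.mk.injEq, hIco]
    constructor
    · rintro ⟨⟨⟨ha, hac⟩, hb, hbc⟩, hdisj, hun, hm⟩
      obtain ⟨x, rfl⟩ := Finset.card_eq_one.mp hac
      obtain ⟨y, rfl⟩ := Finset.card_eq_one.mp hbc
      obtain rfl : m = x := by simpa using hm
      have hy' : y ∈ ({m, m+1} : Finset ℕ) := by
        rw [← hun]; simp
      have hym : y ≠ m := by
        intro h; subst h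
        simp [Finset.disjoint_singleton] at hdisj
      simp only [Finset.mem_insert, Finset.mem_singleton, hym, false_or] at hy'
      subst hy'
      exact ⟨rfl, rfl⟩
    · rintro ⟨rfl, rfl⟩
      refine ⟨⟨⟨?_, rfl⟩, ?_, rfl⟩, ?_, ?_, ?_⟩
      · intro x hx; simp only [Finset.mem_singleton] at hx; simp [hx]
      · intro x hx; simp only [Finset.mem_singleton] at hx; simp [hx]
      · simp only [Finset.disjoint_singleton]; omega
      · ext x; simp [Finset.mem_insert]; try omega
      · simp
  have hmem : (({m}, {m+1}) : Finset ℕ × Finset ℕ) ∈ deltaSet (m+1) 1 := by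
    rw [hset]; simp
  have hgen : ∀ (l : List ℕ) (a : ℕ) (hl : l = [a]) (h : m+1 + l.length = m+1+1),
      sIterATo R (m+1) (m+1+1) l h z = R.s (m+1) a z := by
    intro l a hl h; subst hl; rfl
  have hA : deltaOp R (m+1) 1 z = R.s (m+1) (m+1) z * R.s (m+1) m z := by
    rw [deltaOp,
      Finset.sum_eq_single_of_mem (⟨({m}, {m+1}), hmem⟩ : {x // x ∈ deltaSet (m+1) 1})
        (Finset.mem_attach _ _) ?side]
    case side =>
      rintro ⟨p, hp⟩ _ hb
      have hp' := hp
      rw [hset, Finset.mem_singleton] at hp'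
      exact (hb (Subtype.ext hp')).elim
    exact congrArg₂ (· * ·)
      (hgen _ _ (Finset.sort_singleton _ _) _)
      (hgen _ _ (Finset.sort_singleton _ _) _)
  refine ⟨hA, ?_, ?_⟩
  · intro j hj hjq
    rw [hA, map_mul]
    rcases Nat.lt_or_ge j (m+1) with h | h
    · have h1 : R.d (m+2) j (R.s (m+1) (m+1) z) = R.s m m (R.d (m+1) j z) :=
        AlgHom.congr_fun (hR.ds_lt m j (m+1) (by omega) (by omega)) z
      rw [h1, hz j (by omega), map_zero, zero_mul]
    · have hj2 : j = m+2 := by omega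
      subst hj2
      have h2 : R.d (m+2) (m+2) (R.s (m+1) m z) = R.s m m (R.d (m+1) (m+1) z) :=
        AlgHom.congr_fun (hR.ds_gt m (m+2) m (by omega) (by omega)) z
      rw [h2, hz (m+1) le_rfl, map_zero, mul_zero]
  · have h1 : R.d (m+2) (m+1) (R.s (m+1) (m+1) z) = z :=
      AlgHom.congr_fun (hR.ds_eq (m+1) (m+1) (m+1) (Or.inl rfl) le_rfl) z
    have h2 : R.d (m+2) (m+1) (R.s (m+1) m z) = z :=
      AlgHom.congr_fun (hR.ds_eq (m+1) (m+1) m (Or.inr rfl) (by omega)) z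
    rw [hA, map_mul, h1, h2]
end
end

section
/- Let q ≥ 1 and let z ∈ R_q satisfy d_j(z) = 0 for all 0 ≤ j ≤ q. Then z² = Σ_{j=0}^{q+1} d_j(s_q(z)·s_{q−1}(z)); in particular z² is a boundary in the unnormalized chain complex of R (the chain complex with C_n = R_n and differential Σ_j d_j), so the square of any positive-degree homotopy class of R vanishes. -/
open scoped TensorProduct

noncomputable section

theorem stmt_2 (R : SAlg) (hR : R.IsSimplicial) (q : ℕ) (hq : 1 ≤ q)
    (z : R.X q) (hz : ∀ j ≤ q, R.d q j z = 0) :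
    z * z = ∑ j ∈ Finset.range (q+2), R.d (q+1) j (R.s q q z * R.s q (q-1) z) := by
  obtain ⟨m, rfl⟩ : ∃ m, q = m + 1 := ⟨q - 1, by omega⟩
  have key1 : ∀ j, j ≤ m + 2 →
      R.d (m+2) j (R.s (m+1) (m+1) z) = if m + 1 ≤ j then z else 0 := by
    intro j hj
    by_cases h : m + 1 ≤ j
    · rw [if_pos h]
      have := AlgHom.congr_fun (hR.ds_eq (m+1) j (m+1) (by omega) (le_refl _)) z
      simpa using this
    · rw [if_neg h]
      have := AlgHom.congr_fun (hR.ds_lt m j (m+1) (by omega) (by omega)) z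
      refine this.trans ?_
      show R.s m m ((R.d (m+1) j) z) = 0
      rw [hz j (by omega)]
      simp
  have key2 : ∀ j, j ≤ m + 2 →
      R.d (m+2) j (R.s (m+1) m z) = if j = m ∨ j = m + 1 then z else 0 := by
    intro j hj
    by_cases h : j = m ∨ j = m + 1
    · rw [if_pos h]
      have := AlgHom.congr_fun (hR.ds_eq (m+1) j m h (by omega)) z
      simpa using this
    · rw [if_neg h]
      rcases lt_or_ge j m with hlt | hge
      · have := AlgHom.congr_fun (hR.ds_lt m j m hlt (by omega)) z
        refine this.trans ?_
        show R.s m (m-1) ((R.d (m+1) j) z) = 0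
        rw [hz j (by omega)]
        simp
      · have hj2 : j = m + 2 := by omega
        subst hj2
        have := AlgHom.congr_fun (hR.ds_gt m (m+2) m (by omega) (by omega)) z
        refine this.trans ?_
        show R.s m m ((R.d (m+1) (m+1)) z) = 0
        rw [hz (m+1) (by omega)]
        simp
  have hsub : m + 1 - 1 = m := by omega
  rw [hsub, Finset.sum_eq_single (m+1)]
  · rw [map_mul, key1 (m+1) (by omega), key2 (m+1) (by omega)]
    simp
  · intro j hjmem hjne
    have hjle : j ≤ m + 2 := by
      have := Finset.mem_range.mp hjmem; omega
    rw [map_mul, key1 j hjle, key2 j hjle]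
    split_ifs with h1 h2 <;> first | (exfalso; omega) | simp
  · intro habs
    exact absurd (Finset.mem_range.mpr (by omega)) habs
end
end

section
/- For all simplicial F₂-vector spaces V, W and all i, j ≥ 0, one has D^0_{i,j} + T∘D^0_{j,i}∘T = D_{i,j} + (φ_0)_{i,j} as linear maps V_i⊗W_j → V_{i+j}⊗W_{i+j}, where in the twisted term D^0_{j,i} is evaluated on the pair (W,V). -/
open scoped TensorProduct

noncomputable section

/-!
Every `(i,j)`-shuffle `(μ, ν)` with `i + j > 0` has `0` in exactly one of `μ`, `ν`.
Removing that `0` and lowering all other entries by one identifies the shuffles with `0 ∈ μ`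
with the `(i-1,j)`-shuffles, and the summand of `D_{i,j}` at such a shuffle is the summand of
`S(D_{i-1,j}) ∘ (id ⊗ s₀)` at the corresponding one; the twist does the same for `0 ∈ ν`.
So `D_{i,j} = D⁰_{i,j} + T D⁰_{j,i} T` when `i + j > 0`. For `i = j = 0` both `D⁰` vanish
and `D_{0,0} = id = φ₀`, which cancel over `F₂`.
-/

lemma LinearMap.finsetSum_comp {R A B C ι : Type*} [CommSemiring R] [AddCommMonoid A]
    [AddCommMonoid B] [AddCommMonoid C] [Module R A] [Module R B] [Module R C]
    (s : Finset ι) (f : ι → B →ₗ[R] C) (g : A →ₗ[R] B) :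
    (∑ x ∈ s, f x).comp g = ∑ x ∈ s, (f x).comp g := by
  ext v
  simp [LinearMap.sum_apply]

lemma LinearMap.comp_finsetSum {R A B C ι : Type*} [CommSemiring R] [AddCommMonoid A]
    [AddCommMonoid B] [AddCommMonoid C] [Module R A] [Module R B] [Module R C]
    (s : Finset ι) (g : B →ₗ[R] C) (f : ι → A →ₗ[R] B) :
    g.comp (∑ x ∈ s, f x) = ∑ x ∈ s, g.comp (f x) := by
  ext v
  simp [LinearMap.sum_apply]

lemma SVS.xcast_comp_xcast (V : SVS) {a b c : ℕ} (h₁ : a = b) (h₂ : b = c) :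
    (V.xcast h₂).comp (V.xcast h₁) = V.xcast (h₁.trans h₂) := by
  subst h₁ h₂; rfl

lemma tcast_comp_map (V W : SVS) {a b c e c' e' : ℕ} (h₁ : c = c') (h₂ : e = e')
    (f : V.X a →ₗ[ZMod 2] V.X c) (g : W.X b →ₗ[ZMod 2] W.X e) :
    (tcast V W h₁ h₂).comp (TensorProduct.map f g)
      = TensorProduct.map ((V.xcast h₁).comp f) ((W.xcast h₂).comp g) :=
  (TensorProduct.map_comp _ _ _ _).symm

lemma twist_comp_map_comp_twist (V W : SVS) {a b c e : ℕ}
    (f : V.X a →ₗ[ZMod 2] V.X c) (g : W.X b →ₗ[ZMod 2] W.X e) :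
    (twist W V e c).comp ((TensorProduct.map g f).comp (twist V W a b))
      = TensorProduct.map f g :=
  TensorProduct.ext' fun _ _ => rfl

/-- `sIterTo` with the degree condition moved into the definition (junk value `0`), so that
the target degree can be rewritten independently of the list. -/
def sIterTot (V : SVS) (q m : ℕ) (l : List ℕ) : V.X q →ₗ[ZMod 2] V.X m :=
  if h : q + l.length = m then sIterTo V q m l h else 0

lemma sIterTot_nil (V : SVS) (q : ℕ) : sIterTot V q q [] = LinearMap.id := by
  rw [sIterTot, dif_pos (show q + [].length = q from rfl)]; rfl

lemma sIterTot_cons (V : SVS) (q m a : ℕ) (l : List ℕ) :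
    sIterTot V q m (a :: l) = (sIterTot V (q+1) m l).comp (V.s q a) := by
  by_cases h : q + (a :: l).length = m
  · have h' : q + 1 + l.length = m := by rw [List.length_cons] at h; omega
    rw [sIterTot, dif_pos h, sIterTot, dif_pos h']
    simp only [sIterTo, sIter, ← LinearMap.comp_assoc, SVS.xcast_comp_xcast]
  · have h' : ¬q + 1 + l.length = m := by rw [List.length_cons] at h; omega
    rw [sIterTot, dif_neg h, sIterTot, dif_neg h', LinearMap.zero_comp]

lemma xcast_comp_sIterTot (V : SVS) {q m m' : ℕ} (h : m = m') (l : List ℕ) :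
    (V.xcast h).comp (sIterTot V q m l) = sIterTot V q m' l := by
  subst h; rfl

lemma sIterTot_susp (V : SVS) (q m : ℕ) (l : List ℕ) :
    sIterTot V.susp q m l = sIterTot V (q+1) (m+1) (l.map (· + 1)) := by
  induction l generalizing q with
  | nil =>
    by_cases h : q = m
    · subst h; rw [List.map_nil, sIterTot_nil, sIterTot_nil]; rfl
    · rw [sIterTot, dif_neg (by simpa using h), sIterTot, dif_neg (by simpa using h)]; rfl
  | cons a t ih =>
    rw [List.map_cons, sIterTot_cons, sIterTot_cons, ih]
    rfl

def shuffleTerm (V W : SVS) (i j m : ℕ) (p : Finset ℕ × Finset ℕ) :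
    TT V W i j →ₗ[ZMod 2] TT V W m m :=
  TensorProduct.map (sIterTot V i m (sortAsc p.2)) (sIterTot W j m (sortAsc p.1))

lemma Dmap_eq_sum (V W : SVS) (i j : ℕ) :
    Dmap V W i j = ∑ p ∈ shuffles i j, shuffleTerm V W i j (i+j) p := by
  rw [Dmap, ← Finset.sum_attach (shuffles i j)]
  refine Finset.sum_congr rfl fun p _ => ?_
  rw [shuffleTerm, sIterTot, dif_pos, sIterTot, dif_pos]

lemma sortAsc_map_add_one (s : Finset ℕ) :
    sortAsc (s.map (addRightEmbedding 1)) = (sortAsc s).map (· + 1) :=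
  (Finset.map_sort _ _ _ _ fun _ _ _ _ => by simp).symm

lemma sortAsc_insert_zero {s : Finset ℕ} (hs : 0 ∉ s) :
    sortAsc (insert 0 s) = 0 :: sortAsc s :=
  Finset.sort_insert _ (fun b _ => Nat.zero_le b) hs

lemma mem_shuffles {i j : ℕ} {p : Finset ℕ × Finset ℕ} :
    p ∈ shuffles i j ↔ p.1.card = i ∧ p.2.card = j ∧ Disjoint p.1 p.2
      ∧ p.1 ∪ p.2 = Finset.range (i+j) := by
  simp only [shuffles, Finset.mem_filter, Finset.mem_product, Finset.mem_powersetCard]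
  constructor
  · rintro ⟨⟨⟨-, h₁⟩, -, h₂⟩, h₃, h₄⟩
    exact ⟨h₁, h₂, h₃, h₄⟩
  · rintro ⟨h₁, h₂, h₃, h₄⟩
    exact ⟨⟨⟨h₄ ▸ Finset.subset_union_left, h₁⟩, h₄ ▸ Finset.subset_union_right, h₂⟩,
      h₃, h₄⟩

lemma swap_mem_shuffles {i j : ℕ} {p : Finset ℕ × Finset ℕ} (hp : p ∈ shuffles i j) :
    p.swap ∈ shuffles j i := by
  obtain ⟨h₁, h₂, h₃, h₄⟩ := mem_shuffles.mp hp
  exact mem_shuffles.mpr ⟨h₂, h₁, h₃.symm, by rw [Prod.fst_swap, Prod.snd_swap,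
    Finset.union_comm, h₄, Nat.add_comm]⟩

lemma mem_snd_iff_notMem_fst_of_mem_shuffles {i j k : ℕ} {p : Finset ℕ × Finset ℕ}
    (hp : p ∈ shuffles i j) (hk : k < i + j) : k ∈ p.2 ↔ k ∉ p.1 := by
  obtain ⟨-, -, hdisj, hunion⟩ := mem_shuffles.mp hp
  have hk' : k ∈ p.1 ∪ p.2 := hunion ▸ Finset.mem_range.mpr hk
  rw [Finset.mem_union] at hk'
  exact ⟨fun h₂ h₁ => Finset.disjoint_left.mp hdisj h₁ h₂, hk'.resolve_left⟩

lemma range_add_one_eq_insert_zero_map (n : ℕ) :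
    Finset.range (n+1) = insert 0 ((Finset.range n).map (addRightEmbedding 1)) :=
  Finset.range_add_one' n

def shuffleConsZero (p : Finset ℕ × Finset ℕ) : Finset ℕ × Finset ℕ :=
  (insert 0 (p.1.map (addRightEmbedding 1)), p.2.map (addRightEmbedding 1))

lemma zero_notMem_map_add_one (s : Finset ℕ) : 0 ∉ s.map (addRightEmbedding 1) := by
  simp

lemma insert_zero_map_add_one_inj {s t : Finset ℕ} :
    insert 0 (s.map (addRightEmbedding 1)) = insert 0 (t.map (addRightEmbedding 1)) ↔ s = t := by
  refine ⟨fun h => ?_, fun h => h ▸ rfl⟩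
  have h' := congrArg (Finset.erase · 0) h
  simp only [Finset.erase_insert (zero_notMem_map_add_one _)] at h'
  exact Finset.map_injective _ h'

lemma shuffleConsZero_injective : Function.Injective shuffleConsZero := by
  rintro ⟨a₁, a₂⟩ ⟨b₁, b₂⟩ h
  simp only [shuffleConsZero, Prod.mk.injEq, insert_zero_map_add_one_inj, Finset.map_inj] at h
  rw [h.1, h.2]

lemma shuffleConsZero_mem_shuffles_iff {i j : ℕ} {p : Finset ℕ × Finset ℕ} :
    shuffleConsZero p ∈ shuffles (i+1) j ↔ p ∈ shuffles i j := by
  have hunion : p.1 ∪ p.2 = Finset.range (i+j)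
      ↔ insert 0 (p.1.map (addRightEmbedding 1)) ∪ p.2.map (addRightEmbedding 1)
        = Finset.range (i+1+j) := by
    rw [Finset.insert_union, ← Finset.map_union, Nat.add_right_comm,
      range_add_one_eq_insert_zero_map, insert_zero_map_add_one_inj]
  rw [mem_shuffles, mem_shuffles, hunion, shuffleConsZero, Finset.card_insert_of_notMem
    (zero_notMem_map_add_one _), Finset.card_map, Finset.card_map, Finset.disjoint_insert_left,
    Finset.disjoint_map]
  simp

lemma map_add_one_preimage (s : Finset ℕ) :
    (s.preimage (· + 1) (add_left_injective 1).injOn).map (addRightEmbedding 1) = s.erase 0 := by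
  ext x
  cases x <;> simp

lemma filter_zero_mem_fst_shuffles (i j : ℕ) :
    (shuffles (i+1) j).filter (fun q => 0 ∈ q.1) = (shuffles i j).image shuffleConsZero := by
  ext q
  rw [Finset.mem_filter, Finset.mem_image]
  constructor
  · rintro ⟨hq, h0⟩
    have h0' : 0 ∉ q.2 := fun h =>
      (mem_snd_iff_notMem_fst_of_mem_shuffles (k := 0) hq (by omega)).mp h h0
    let p : Finset ℕ × Finset ℕ := (q.1.preimage (· + 1) (add_left_injective 1).injOn,
      q.2.preimage (· + 1) (add_left_injective 1).injOn)
    have hpq : shuffleConsZero p = q := by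
      rw [shuffleConsZero, map_add_one_preimage, map_add_one_preimage,
        Finset.insert_erase h0, Finset.erase_eq_of_notMem h0']
    exact ⟨p, shuffleConsZero_mem_shuffles_iff.mp (hpq ▸ hq), hpq⟩
  · rintro ⟨p, hp, rfl⟩
    exact ⟨shuffleConsZero_mem_shuffles_iff.mpr hp, Finset.mem_insert_self _ _⟩

lemma D0_succ_eq_sum (V W : SVS) (i j : ℕ) :
    D0 V W (i+1) j
      = ∑ p ∈ shuffles i j, shuffleTerm V W (i+1) j (i+1+j) (shuffleConsZero p) := by
  rw [D0, Dmap_eq_sum, LinearMap.finsetSum_comp]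
  refine (LinearMap.comp_finsetSum _ _ _).trans (Finset.sum_congr rfl fun p _ => ?_)
  rw [shuffleTerm, shuffleTerm, sIterTot_susp, sIterTot_susp]
  -- read `S(V)_n` as `V_{n+1}`, so that the two tensor maps compose
  change (tcast V W (a := i+j+1) (b := i+j+1) _ _).comp
    ((TensorProduct.map (sIterTot V (i+1) (i+j+1) ((sortAsc p.2).map (· + 1)))
      (sIterTot W (j+1) (i+j+1) ((sortAsc p.1).map (· + 1)))).comp
      (TensorProduct.map (LinearMap.id : V.X (i+1) →ₗ[ZMod 2] V.X (i+1)) (W.s j 0))) = _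
  rw [← TensorProduct.map_comp, LinearMap.comp_id, ← sIterTot_cons, tcast_comp_map,
    xcast_comp_sIterTot, xcast_comp_sIterTot, shuffleConsZero,
    sortAsc_insert_zero (zero_notMem_map_add_one _), sortAsc_map_add_one, sortAsc_map_add_one]

lemma D0_eq_sum_filter (V W : SVS) (i j : ℕ) :
    D0 V W i j
      = ∑ p ∈ (shuffles i j).filter (fun p => 0 ∈ p.1), shuffleTerm V W i j (i+j) p := by
  cases i with
  | zero =>
    refine (Finset.sum_eq_zero fun p hp => ?_).symm
    obtain ⟨hp, h0⟩ := Finset.mem_filter.mp hp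
    rw [Finset.card_eq_zero.mp (mem_shuffles.mp hp).1] at h0
    exact absurd h0 (Finset.notMem_empty 0)
  | succ i =>
    rw [D0_succ_eq_sum, filter_zero_mem_fst_shuffles,
      Finset.sum_image fun p _ q _ h => shuffleConsZero_injective h]

lemma TD0T_eq_sum_filter (V W : SVS) (i j : ℕ) :
    TD0T V W i j
      = ∑ p ∈ (shuffles i j).filter (fun p => 0 ∈ p.2), shuffleTerm V W i j (i+j) p := by
  rw [TD0T, D0_eq_sum_filter W V j i, LinearMap.finsetSum_comp, LinearMap.comp_finsetSum,
    LinearMap.comp_finsetSum]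
  refine Finset.sum_nbij' Prod.swap Prod.swap ?_ ?_ (fun _ _ => rfl) (fun _ _ => rfl) ?_
  · intro q hq
    obtain ⟨hq, h0⟩ := Finset.mem_filter.mp hq
    exact Finset.mem_filter.mpr ⟨swap_mem_shuffles hq, h0⟩
  · intro p hp
    obtain ⟨hp, h0⟩ := Finset.mem_filter.mp hp
    exact Finset.mem_filter.mpr ⟨swap_mem_shuffles hp, h0⟩
  · intro q _
    rw [shuffleTerm, twist_comp_map_comp_twist, tcast_comp_map, xcast_comp_sIterTot,
      xcast_comp_sIterTot]
    rfl

lemma Dmap_eq_D0_add_TD0T (V W : SVS) {i j : ℕ} (hij : 0 < i + j) :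
    Dmap V W i j = D0 V W i j + TD0T V W i j := by
  rw [D0_eq_sum_filter, TD0T_eq_sum_filter, Dmap_eq_sum,
    ← Finset.sum_filter_add_sum_filter_not _ (fun p => 0 ∈ p.1)]
  congr 1
  refine Finset.sum_congr (Finset.filter_congr fun p hp => ?_) fun _ _ => rfl
  exact (mem_snd_iff_notMem_fst_of_mem_shuffles hp hij).symm

lemma Dmap_zero_zero (V W : SVS) : Dmap V W 0 0 = LinearMap.id := by
  have hshuffles : shuffles 0 0 = {(∅, ∅)} := by
    ext p
    simp only [mem_shuffles, Finset.card_eq_zero, Finset.mem_singleton, Prod.ext_iff]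
    constructor
    · rintro ⟨h₁, h₂, -, -⟩
      exact ⟨h₁, h₂⟩
    · rintro ⟨h₁, h₂⟩
      simp [h₁, h₂]
  rw [Dmap_eq_sum, hshuffles, Finset.sum_singleton, shuffleTerm, sortAsc, Finset.sort_empty,
    sIterTot_nil, sIterTot_nil, TensorProduct.map_id]

theorem stmt_7 (V W : SVS) (i j : ℕ) :
    D0 V W i j + TD0T V W i j
      = Dmap V W i j
        + (tcast V W (show i+j-0 = i+j by omega) (show i+j-0 = i+j by omega)).comp
            (phi V W 0 i j) := by
  by_cases h00 : i = 0 ∧ j = 0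
  · obtain ⟨rfl, rfl⟩ := h00
    have hD0 : D0 V W 0 0 = 0 := rfl
    have hTD0T : TD0T V W 0 0 = 0 := by
      rw [TD0T, show D0 W V 0 0 = 0 from rfl, LinearMap.zero_comp, LinearMap.comp_zero,
        LinearMap.comp_zero]
    have hphi : (tcast V W (show 0+0-0 = 0+0 by omega) (show 0+0-0 = 0+0 by omega)).comp
        (phi V W 0 0 0) = Dmap V W 0 0 := by
      rw [phi, dif_pos ⟨rfl, rfl⟩, Dmap_zero_zero]
      exact TensorProduct.ext' fun _ _ => rfl
    rw [hD0, hTD0T, hphi, ← two_nsmul (Dmap V W 0 0), ZModModule.char_nsmul_eq_zero 2]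
    exact zero_add 0
  · rw [phi, dif_neg h00, LinearMap.comp_zero, add_zero, Dmap_eq_D0_add_TD0T V W (by omega)]
end
end
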